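/- There exist constants c, C > 0 such that for every n ≥ 2 and every real h ≥ C log n, in a uniform random recursive tree on n vertices whose edges carry independent Geometric(1/2) random variables, the probability that some vertex has reaching time larger than h is at most e^{−ch}. -/

import Mathlib

open MeasureTheory Filter
open scoped ENNReal

noncomputable section

/-- The `k`-th binary digit of `x ∈ [0,1)` (after the binary point). -/
def bit (x : ℝ) (k : ℕ) : Bool := ⌊x * 2 ^ (k + 1)⌋ % 2 == 1

/-- From one uniform sample on `[0,1]`, extract countably many independent uniform
samples on `[0,1]`, using disjoint subsequences of binary digits. -/
def uSlice (x : ℝ) (i : ℕ) : ℝ :=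
  ∑' j : ℕ, if bit x (Nat.pair i j) then ((2 : ℝ) ^ (-(j : ℤ) - 1)) else 0

/-- The base probability space: Lebesgue measure restricted to `[0,1]`. -/
def μ0 : Measure ℝ := volume.restrict (Set.Icc 0 1)

/-- The vertex set of the lattice `ℤ^d`. -/
abbrev V (d : ℕ) := Fin d → ℤ

instance (d : ℕ) : MeasurableSpace (Finset (V d)) := ⊤

open Classical in
/-- `B[r]`: the Euclidean ball of radius `r` in `ℤ^d`, as a `Finset`. -/
def ball (d : ℕ) (r : ℝ) : Finset (V d) :=
  (Finset.Icc (fun _ => -⌈r⌉) (fun _ => ⌈r⌉)).filter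
    (fun y => Real.sqrt (∑ i, ((y i : ℝ)) ^ 2) ≤ r)

/-- `b_n`: the number of lattice points in the Euclidean ball of radius `n`. -/
def bn (d n : ℕ) : ℕ := (ball d n).card

/-- The `2d` unit vectors of `ℤ^d` (the possible steps of the simple random walk). -/
def unitVecs (d : ℕ) : Finset (V d) :=
  Finset.image
    (fun p : Fin d × Bool => fun j => if j = p.1 then (if p.2 then 1 else -1) else 0)
    Finset.univ

/-- Given `u` uniform on `[0,1]`, `pick S u` is a uniformly chosen element of `S`. -/
def pick {d : ℕ} (S : Finset (V d)) (u : ℝ) : V d :=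
  if h : S.Nonempty then
    (S.equivFin.symm ⟨(⌊u * S.card⌋).toNat % S.card,
      Nat.mod_lt _ (Finset.card_pos.mpr h)⟩).val
  else 0

/-- Position at time `t` of the simple random walk started at `x`, driven by the
random seed `ω`: the steps `pick (unitVecs d) (uSlice ω i)` are i.i.d. uniform on
the `2d` unit vectors when `ω` is uniform on `[0,1]`. -/
def walk {d : ℕ} (x : V d) (ω : ℝ) (t : ℕ) : V d :=
  x + ∑ i ∈ Finset.range t, pick (unitVecs d) (uSlice ω i)

/-- `t_S`: the first time the walk started at `x` is outside `S`. -/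
def exitT {d : ℕ} (S : Finset (V d)) (x : V d) (ω : ℝ) : ℕ :=
  sInf {t | walk x ω t ∉ S}

/-- The position `ξ(t_S)` at which the walk started at `x` first exits `S`. -/
def hitPt {d : ℕ} (S : Finset (V d)) (x : V d) (ω : ℝ) : V d :=
  walk x ω (exitT S x ω)

/-- `Add[ξ,S]`: add to `S` the exit point of a random walk started at `x`. -/
def addPt {d : ℕ} (S : Finset (V d)) (x : V d) (ω : ℝ) : Finset (V d) :=
  insert (hitPt S x ω) S

/-- `P_x(ξ(τ_A) = y)`: the probability that the walk started at `x` exits `A` at `y`. -/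
def hitProb {d : ℕ} (A : Finset (V d)) (x y : V d) : ℝ≥0∞ :=
  μ0 {ω | hitPt A x ω = y}

/-- The outer boundary `∂A`: vertices outside `A` with a neighbour in `A`. -/
def outb {d : ℕ} (A : Finset (V d)) : Finset (V d) :=
  (A.biUnion fun x => (unitVecs d).image (fun e => x + e)) \ A

/-- `DA_X(S)`: the IDLA aggregate obtained from `S` by launching one particle from each
point of the list `xs` in turn (driven by independent slices of the seed `ω`). -/
def daFrom {d : ℕ} : Finset (V d) → List (V d) → ℝ → Finset (V d)
  | S, [], _ => S
  | S, x :: xs, ω => daFrom (addPt S x (uSlice ω 0)) xs (uSlice ω 1)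

/-- The law of the IDLA aggregate `DA_X(S)`. -/
def daLaw {d : ℕ} (S : Finset (V d)) (xs : List (V d)) : Measure (Finset (V d)) :=
  μ0.map (fun ω => daFrom S xs ω)

/-- One uIDLA step: launch a particle from a uniformly chosen point of `S`. -/
def uStep {d : ℕ} (S : Finset (V d)) (ω : ℝ) : Finset (V d) :=
  addPt S (pick S (uSlice ω 0)) (uSlice ω 1)

/-- `A_k(S)`: the uIDLA aggregate obtained by adding `k` particles to `S`,
each started at a uniform point of the current aggregate. -/
def uAggFrom {d : ℕ} (S : Finset (V d)) (ω : ℝ) : ℕ → Finset (V d)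
  | 0 => S
  | k + 1 => uStep (uAggFrom S ω k) (uSlice ω k)

/-- The law of the uIDLA aggregate `A_k(S)`. -/
def uLaw {d : ℕ} (S : Finset (V d)) (k : ℕ) : Measure (Finset (V d)) :=
  μ0.map (fun ω => uAggFrom S ω k)

/-- One step of the subset uIDLA `A_·(E;m)`: at step `k`, perform a uIDLA step
with probability `|E|/(m+k)` and otherwise do nothing. -/
def subStep {d : ℕ} (m k : ℕ) (E : Finset (V d)) (ω : ℝ) : Finset (V d) :=
  if uSlice ω 0 * ((m : ℝ) + k) ≤ E.card then uStep E (uSlice ω 1) else E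

/-- The subset uIDLA `A_n(E;m)`. -/
def subAggFrom {d : ℕ} (E : Finset (V d)) (m : ℕ) (ω : ℝ) : ℕ → Finset (V d)
  | 0 => E
  | k + 1 => subStep m k (subAggFrom E m ω k) (uSlice ω k)

/-- The law of the subset uIDLA `A_n(E;m)`. -/
def subLaw {d : ℕ} (E : Finset (V d)) (m k : ℕ) : Measure (Finset (V d)) :=
  μ0.map (fun ω => subAggFrom E m ω k)

/-- Stochastic domination of random finite subsets of `ℤ^d`: `μ` dominates `ν` if
there is a coupling under which the sample of `ν` is a.s. contained in that of `μ`. -/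
def StochDom {d : ℕ} (μ ν : Measure (Finset (V d))) : Prop :=
  ∃ π : Measure (Finset (V d) × Finset (V d)), IsProbabilityMeasure π ∧
    π.map Prod.fst = μ ∧ π.map Prod.snd = ν ∧ π {p | p.2 ⊆ p.1} = 1

/-- A `Geometric(1/2)` sample (taking value `j ≥ 0` with probability `2^{-(j+1)}`)
produced from a uniform sample `u` on `[0,1]` by inverting the CDF. -/
def geom (u : ℝ) : ℕ := sInf {j : ℕ | u ≤ 1 - (2 : ℝ) ^ (-(j : ℤ) - 1)}

/-- The parent of vertex `j ≥ 1` in the uniform random recursive tree (vertex `0` is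
the root): uniform on `{0, …, j-1}` when the seed is uniform on `[0,1]`. -/
def parent (ω : ℝ) (j : ℕ) : ℕ := (⌊uSlice ω (Nat.pair 0 j) * j⌋).toNat % j

/-- The reaching time of vertex `j` in a uniform random recursive tree whose edges
carry i.i.d. `Geometric(1/2)` weights: the sum of the weights on the path from the
root to `j`. (The `min` is a.s. inoperative, since a.s. `parent ω (j+1) ≤ j`.) -/
def reach (ω : ℝ) : ℕ → ℕ
  | 0 => 0
  | j + 1 => reach ω (min (parent ω (j + 1)) j) + geom (uSlice ω (Nat.pair 1 (j + 1)))
termination_by j => j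
decreasing_by exact Nat.lt_succ_of_le (min_le_right _ _)

end

/-!
All randomness is read off the binary digits of the seed `ω`, and prescribing `m` of these digits
is an event of probability at most `2 ^ (-m)`, since it is a union of dyadic intervals. If vertex
`j > 0` has reaching time at least `r`, its parent `w < j` has reaching time at least `r - a`,
where `a ≤ r` is a lower bound on the weight of the edge `w j`. The weight bound prescribes `a`
digits (all `1`), and the parent choice forces the first `T` digits of the parent sample into a set
of at most `2 ^ (T + 1) / j` patterns. These digits belong to `j` alone, while the event for `w`
only reads digits of vertices `≤ w`, so induction on `j` bounds the probability by
`(2 / 3) ^ r * C(j + 8, 8)`. A union bound over `j < n` gives at most `(2 / 3) ^ h * n ^ 36`,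
which is at most `exp (-h / 5)` once `h ≥ 360 log n`.
-/

namespace ReachingTime

open Finset

noncomputable section

lemma testBit_sum_two_pow (s : Finset ℕ) (t : ℕ) :
    (∑ i ∈ s, 2 ^ i).testBit t = decide (t ∈ s) := by
  rw [Bool.eq_iff_iff, decide_eq_true_iff, ← Nat.mem_bitIndices, ← List.mem_toFinset,
    Finset.toFinset_bitIndices_sum_two_pow]

lemma summable_half_pow_succ : Summable fun k : ℕ => (1 / 2 : ℝ) ^ (k + 1) := by
  simpa only [pow_succ] using summable_geometric_two.mul_right (1 / 2)

lemma tsum_half_pow_succ : ∑' k : ℕ, (1 / 2 : ℝ) ^ (k + 1) = 1 := by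
  simp only [pow_succ]
  rw [tsum_mul_right, tsum_geometric_two]
  norm_num

def binVal (c : ℕ → Bool) : ℝ := ∑' k, if c k then (1 / 2 : ℝ) ^ (k + 1) else 0

def binNat (c : ℕ → Bool) (T : ℕ) : ℕ := ∑ k ∈ range T, if c k then 2 ^ (T - 1 - k) else 0

section BinaryExpansion

variable (c : ℕ → Bool)

lemma binDigit_le (k : ℕ) : (if c k then (1 / 2 : ℝ) ^ (k + 1) else 0) ≤ (1 / 2) ^ (k + 1) := by
  split <;> [rfl; positivity]

lemma summable_binDigit : Summable fun k => if c k then (1 / 2 : ℝ) ^ (k + 1) else 0 :=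
  Summable.of_nonneg_of_le (fun k => by positivity) (binDigit_le c) summable_half_pow_succ

lemma binNat_eq_sum_two_pow (T : ℕ) :
    binNat c T = ∑ t ∈ (range T).filter (fun t => c (T - 1 - t)), 2 ^ t := by
  rw [Finset.sum_filter, binNat, ← Finset.sum_range_reflect]
  refine Finset.sum_congr rfl fun t ht => ?_
  rw [show T - 1 - (T - 1 - t) = t by have := mem_range.1 ht; omega]

lemma binNat_lt (T : ℕ) : binNat c T < 2 ^ T := by
  rw [binNat_eq_sum_two_pow]
  exact Nat.geomSum_lt le_rfl fun t ht => mem_range.1 (mem_filter.1 ht).1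

lemma testBit_binNat {T k : ℕ} (hk : k < T) : (binNat c T).testBit (T - 1 - k) = c k := by
  rw [binNat_eq_sum_two_pow, testBit_sum_two_pow]
  simp [show T - 1 - (T - 1 - k) = k by omega, show T - 1 - k < T by omega]

lemma binNat_div_eq_sum (T : ℕ) :
    (binNat c T : ℝ) / 2 ^ T = ∑ k ∈ range T, if c k then (1 / 2 : ℝ) ^ (k + 1) else 0 := by
  rw [binNat, Nat.cast_sum, Finset.sum_div]
  refine Finset.sum_congr rfl fun k hk => ?_
  have hT : (2 : ℝ) ^ T = 2 ^ (T - 1 - k) * 2 ^ (k + 1) := by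
    rw [← pow_add]; congr 1; have := mem_range.1 hk; omega
  split
  · push_cast
    rw [hT, div_mul_cancel_left₀ (by positivity), one_div_pow, one_div]
  · simp

lemma binNat_div_le_binVal (T : ℕ) : (binNat c T : ℝ) / 2 ^ T ≤ binVal c := by
  rw [binNat_div_eq_sum]
  exact (summable_binDigit c).sum_le_tsum _ fun k _ => by positivity

lemma binVal_le_binNat_add_one_div (T : ℕ) : binVal c ≤ (binNat c T + 1) / 2 ^ T := by
  have htail : ∑' k, (if c (k + T) then (1 / 2 : ℝ) ^ (k + T + 1) else 0) ≤ 1 / 2 ^ T :=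
    calc _ ≤ ∑' k : ℕ, (1 / 2 : ℝ) ^ T * (1 / 2) ^ (k + 1) :=
          ((summable_binDigit c).comp_injective (add_left_injective T)).tsum_le_tsum
            (fun k => (binDigit_le c _).trans_eq (by ring)) (summable_half_pow_succ.mul_left _)
      _ = 1 / 2 ^ T := by rw [tsum_mul_left, tsum_half_pow_succ, mul_one, one_div_pow]
  rw [binVal, ← (summable_binDigit c).sum_add_tsum_nat_add T, ← binNat_div_eq_sum, add_div]
  exact (add_le_add_iff_left _).2 htail

lemma binVal_nonneg : 0 ≤ binVal c := tsum_nonneg fun k => by positivity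

lemma binVal_le_one : binVal c ≤ 1 := by
  simpa [binNat] using binVal_le_binNat_add_one_div c 0

lemma eq_true_of_one_sub_lt_binVal {k : ℕ} (h : 1 - (1 / 2 : ℝ) ^ (k + 1) < binVal c) :
    c k = true := by
  by_contra hk
  have hle : binVal c ≤ ∑' l : ℕ, if l = k then 0 else (1 / 2 : ℝ) ^ (l + 1) :=
    (summable_binDigit c).tsum_le_tsum
      (fun l => by
        rcases eq_or_ne l k with rfl | hl
        · simp [hk]
        · simpa [hl] using binDigit_le c l)
      (summable_half_pow_succ.summable_of_eq_zero_or_self fun l => by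
        by_cases hl : l = k <;> simp [hl])
  rw [← add_le_add_iff_left ((1 / 2 : ℝ) ^ (k + 1)), ← summable_half_pow_succ.tsum_eq_add_tsum_ite,
    tsum_half_pow_succ] at hle
  linarith

end BinaryExpansion

lemma bit_eq_testBit_floor {x : ℝ} (hx : 0 ≤ x) {N p : ℕ} (hp : p < N) :
    bit x p = (⌊x * 2 ^ N⌋₊).testBit (N - 1 - p) := by
  have hx' : x * 2 ^ (p + 1) = x * 2 ^ N / ((2 ^ (N - 1 - p) : ℕ) : ℝ) := by
    rw [eq_div_iff (by positivity), Nat.cast_pow, Nat.cast_ofNat, mul_assoc, ← pow_add]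
    congr 2; omega
  rw [bit, ← Int.natCast_floor_eq_floor (by positivity), hx', Nat.floor_div_natCast,
    Nat.testBit_eq_decide_div_mod_eq]
  generalize ⌊x * 2 ^ N⌋₊ / 2 ^ (N - 1 - p) = n
  rw [Bool.beq_eq_decide_eq, decide_eq_decide]
  omega

lemma card_filter_testBit_mul_le (N : ℕ) {F : Finset ℕ} {e : ℕ → ℕ} (he : Set.InjOn e F)
    (heN : ∀ p ∈ F, e p < N) (π : ℕ → Bool) :
    #{K ∈ range (2 ^ N) | ∀ p ∈ F, K.testBit (e p) = π p} * 2 ^ #F ≤ 2 ^ N := by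
  set M := {K ∈ range (2 ^ N) | ∀ p ∈ F, K.testBit (e p) = π p}
  set G := F.image e
  have hG : #G = #F := card_image_of_injOn he
  have hGN : G ⊆ range N := fun t ht => by
    obtain ⟨p, hp, rfl⟩ := mem_image.1 ht; exact mem_range.2 (heN p hp)
  have hmaps : ∀ K ∈ M,
      K.bitIndices.toFinset \ G ∈ (range N \ G).powerset := by
    intro K hK
    refine mem_powerset.2 (sdiff_subset_sdiff (fun t ht => mem_range.2 ?_) le_rfl)
    by_contra htN
    have := Nat.testBit_lt_two_pow ((mem_range.1 (mem_filter.1 hK).1).trans_le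
      (Nat.pow_le_pow_right two_pos (not_lt.1 htN)))
    simp_all
  have hinj : Set.InjOn (fun K : ℕ => K.bitIndices.toFinset \ G) M := by
    intro K₁ hK₁ K₂ hK₂ h
    refine Nat.eq_of_testBit_eq fun t => ?_
    by_cases ht : t ∈ G
    · obtain ⟨p, hp, rfl⟩ := mem_image.1 ht
      rw [(mem_filter.1 hK₁).2 p hp, (mem_filter.1 hK₂).2 p hp]
    · have := congrArg (t ∈ ·) h
      simpa [ht] using this
  have hcard := card_le_card_of_injOn _ hmaps hinj
  rw [card_powerset, card_sdiff_of_subset hGN, card_range, hG] at hcard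
  calc _ ≤ 2 ^ (N - #F) * 2 ^ #F := Nat.mul_le_mul_right _ hcard
    _ = 2 ^ N := by
      rw [← pow_add, Nat.sub_add_cancel (hG ▸ (card_le_card hGN).trans_eq (card_range N))]

def bitCyl (F : Finset ℕ) (π : ℕ → Bool) : Set ℝ := {x | ∀ p ∈ F, bit x p = π p}

lemma μ0_eq_volume_inter_Ico (s : Set ℝ) : μ0 s = volume (s ∩ Set.Ico 0 1) := by
  rw [μ0, Measure.restrict_congr_set Ico_ae_eq_Icc.symm, Measure.restrict_apply' measurableSet_Ico]

lemma measure_bitCyl_le (F : Finset ℕ) (π : ℕ → Bool) :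
    μ0 (bitCyl F π) ≤ ENNReal.ofReal ((1 / 2) ^ #F) := by
  set N := F.sup id + 1
  have hFN : ∀ p ∈ F, p < N := fun p hp => Nat.lt_succ_of_le (le_sup (f := id) hp)
  set M := {K ∈ range (2 ^ N) | ∀ p ∈ F, K.testBit (N - 1 - p) = π p}
  have h2N : (0 : ℝ) < 2 ^ N := by positivity
  have hsub : bitCyl F π ∩ Set.Ico 0 1 ⊆ ⋃ K ∈ M, Set.Ico ((K : ℝ) / 2 ^ N) ((K + 1) / 2 ^ N) := by
    rintro x ⟨hx, hx0, hx1⟩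
    have hK : ⌊x * 2 ^ N⌋₊ < 2 ^ N := by
      rw [Nat.floor_lt (by positivity)]; push_cast; nlinarith
    refine Set.mem_biUnion (x := ⌊x * 2 ^ N⌋₊)
      (mem_filter.2 ⟨mem_range.2 hK, fun p hp => ?_⟩) ⟨?_, ?_⟩
    · rw [← bit_eq_testBit_floor hx0 (hFN p hp)]; exact hx p hp
    · rw [div_le_iff₀ h2N]; exact Nat.floor_le (by positivity)
    · rw [lt_div_iff₀ h2N]; exact Nat.lt_floor_add_one _
  have hcount : (#M : ℝ) * 2 ^ #F ≤ 2 ^ N := by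
    exact_mod_cast card_filter_testBit_mul_le N (fun p hp q hq h => by
      have := hFN p hp; have := hFN q hq; omega) (fun p hp => by
      have := hFN p hp; omega) π
  calc μ0 (bitCyl F π) ≤ ∑ K ∈ M, volume (Set.Ico ((K : ℝ) / 2 ^ N) ((K + 1) / 2 ^ N)) := by
        rw [μ0_eq_volume_inter_Ico]; exact (measure_mono hsub).trans (measure_biUnion_finset_le _ _)
    _ = ENNReal.ofReal (#M / 2 ^ N) := by
        have hvol : ∀ K : ℕ, volume (Set.Ico ((K : ℝ) / 2 ^ N) ((K + 1) / 2 ^ N))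
            = ENNReal.ofReal (1 / 2 ^ N) := fun K => by rw [Real.volume_Ico]; congr 1; ring
        rw [sum_congr rfl fun K _ => hvol K, sum_const, nsmul_eq_mul, ← ENNReal.ofReal_natCast,
          ← ENNReal.ofReal_mul (by positivity), mul_one_div]
    _ ≤ ENNReal.ofReal ((1 / 2) ^ #F) := by
        refine ENNReal.ofReal_le_ofReal ?_
        rw [div_le_iff₀ h2N, one_div_pow, one_div_mul_eq_div, le_div_iff₀ (by positivity)]
        exact hcount

lemma two_zpow_neg_sub_one (j : ℕ) : (2 : ℝ) ^ (-(j : ℤ) - 1) = (1 / 2) ^ (j + 1) := by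
  rw [show -(j : ℤ) - 1 = -((j + 1 : ℕ) : ℤ) by push_cast; ring, zpow_neg, zpow_natCast,
    one_div_pow, one_div]

lemma uSlice_eq_binVal (ω : ℝ) (i : ℕ) : uSlice ω i = binVal fun k => bit ω (Nat.pair i k) := by
  simp only [uSlice, binVal, two_zpow_neg_sub_one]

lemma one_sub_lt_of_lt_geom {u : ℝ} {k : ℕ} (hk : k < geom u) : 1 - (1 / 2 : ℝ) ^ (k + 1) < u := by
  have := Nat.notMem_of_lt_sInf hk
  simpa [two_zpow_neg_sub_one] using this

lemma card_le_of_forall_mem_Icc (s : Finset ℕ) {x y : ℝ} (hy : 0 ≤ y) (hxy : x ≤ y + 1)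
    (hs : ∀ K ∈ s, x ≤ K ∧ (K : ℝ) ≤ y) : (#s : ℝ) ≤ y - x + 1 := by
  have hsub : s ⊆ Icc ⌈x⌉₊ ⌊y⌋₊ := fun K hK =>
    mem_Icc.2 ⟨Nat.ceil_le.2 (hs K hK).1, Nat.le_floor (hs K hK).2⟩
  have hcard := (Nat.cast_le (α := ℝ)).2 ((card_le_card hsub).trans_eq (Nat.card_Icc _ _))
  refine hcard.trans ?_
  rcases le_or_gt ⌈x⌉₊ (⌊y⌋₊ + 1) with h | h
  · rw [Nat.cast_sub h]
    push_cast
    linarith [Nat.floor_le hy, Nat.le_ceil x]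
  · rw [Nat.sub_eq_zero_of_le h.le, Nat.cast_zero]
    linarith

open Classical in
/-- The `T`-digit binary truncations `K / 2 ^ T` of the numbers `u ∈ [0, 1]` that give
`⌊u v⌋ mod v = w`; the extra point `2 ^ T - 1` accounts for `u = 1`. -/
def parentPatterns (v w T : ℕ) : Finset ℕ :=
  (range (2 ^ T)).filter (fun K => (w : ℝ) / v ≤ (K + 1) / 2 ^ T ∧ (K : ℝ) / 2 ^ T ≤ (w + 1) / v)
    ∪ {2 ^ T - 1}

lemma mem_parentPatterns {u : ℝ} (hu0 : 0 ≤ u) (hu1 : u ≤ 1) {v T K : ℕ} (hv : 0 < v)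
    (hK : K < 2 ^ T) (hKu : K / 2 ^ T ≤ u) (huK : u ≤ (K + 1) / 2 ^ T) :
    K ∈ parentPatterns v ((⌊u * v⌋).toNat % v) T := by
  have h2T : (0 : ℝ) < 2 ^ T := by positivity
  have hv' : (0 : ℝ) < v := by exact_mod_cast hv
  rcases hu1.eq_or_lt with rfl | hu1
  · refine mem_union_right _ (mem_singleton.2 ?_)
    have : (2 : ℝ) ^ T ≤ K + 1 := by rwa [le_div_iff₀ h2T, one_mul] at huK
    have : 2 ^ T ≤ K + 1 := by exact_mod_cast this
    omega
  · have hfloor : 0 ≤ ⌊u * v⌋ := Int.floor_nonneg.2 (by positivity)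
    have hw : ((⌊u * v⌋).toNat : ℝ) = ⌊u * v⌋ := by exact_mod_cast Int.toNat_of_nonneg hfloor
    have hwv : (⌊u * v⌋).toNat < v := by
      have : ((⌊u * v⌋).toNat : ℝ) < v := by
        rw [hw]; exact (Int.floor_le _).trans_lt (by nlinarith)
      exact_mod_cast this
    rw [Nat.mod_eq_of_lt hwv]
    refine mem_union_left _ (mem_filter.2 ⟨mem_range.2 hK, ?_, ?_⟩)
    · calc _ ≤ u := by rw [div_le_iff₀ hv', hw]; exact Int.floor_le _
        _ ≤ _ := huK
    · calc _ ≤ u := hKu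
        _ ≤ _ := by rw [le_div_iff₀ hv', hw]; exact (Int.lt_floor_add_one _).le

lemma card_parentPatterns_mul_le {v T : ℕ} (hv : 0 < v) (hT : 4 * v ≤ 2 ^ T) (w : ℕ) :
    #(parentPatterns v w T) * v ≤ 2 ^ (T + 1) := by
  have h2T : (0 : ℝ) < 2 ^ T := by positivity
  have hv' : (0 : ℝ) < v := by exact_mod_cast hv
  set s := (range (2 ^ T)).filter
    (fun K : ℕ => (w : ℝ) / v ≤ (K + 1) / 2 ^ T ∧ (K : ℝ) / 2 ^ T ≤ (w + 1) / v)
  have hs : (#s : ℝ) ≤ (w + 1) * 2 ^ T / v - (w * 2 ^ T / v - 1) + 1 := by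
    refine card_le_of_forall_mem_Icc s (by positivity) ?_ fun K hK => ?_
    · rw [add_mul, one_mul, add_div]
      linarith [div_nonneg h2T.le hv'.le]
    · obtain ⟨-, h1, h2⟩ := mem_filter.1 hK
      rw [div_le_div_iff₀ hv' h2T] at h1
      rw [div_le_div_iff₀ h2T hv'] at h2
      constructor
      · rw [sub_le_iff_le_add, div_le_iff₀ hv']; linarith
      · rw [le_div_iff₀ hv']; linarith
  have hcard : (#(parentPatterns v w T) : ℝ) ≤ #s + 1 := by
    exact_mod_cast (card_union_le s {2 ^ T - 1}).trans_eq (by rw [card_singleton])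
  have hT' : (4 * v : ℝ) ≤ 2 ^ T := by exact_mod_cast hT
  have : (#(parentPatterns v w T) : ℝ) * v ≤ 2 ^ (T + 1) := by
    calc (#(parentPatterns v w T) : ℝ) * v
        ≤ ((w + 1) * 2 ^ T / v - (w * 2 ^ T / v - 1) + 2) * v := by gcongr; linarith
      _ = 2 ^ T + 3 * v := by
        rw [show (w + 1) * 2 ^ T / v - (w * 2 ^ T / v - 1) + 2 = (2 : ℝ) ^ T / v + 3 by ring,
          add_mul, div_mul_cancel₀ _ hv'.ne']
      _ ≤ 2 ^ (T + 1) := by rw [pow_succ]; linarith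
  exact_mod_cast this

lemma sum_half_pow_mul_two_thirds_pow_le (r : ℕ) :
    ∑ a ∈ range (r + 1), (1 / 2 : ℝ) ^ a * (2 / 3) ^ (r - a) ≤ 4 * (2 / 3) ^ r := by
  have hterm : ∀ a ∈ range (r + 1),
      (1 / 2 : ℝ) ^ a * (2 / 3) ^ (r - a) = (2 / 3) ^ r * (3 / 4) ^ a := fun a ha => by
      rw [← Nat.sub_add_cancel (Nat.lt_succ_iff.1 (mem_range.1 ha)), pow_add, Nat.add_sub_cancel]
      rw [show (1 / 2 : ℝ) = 2 / 3 * (3 / 4) by norm_num, mul_pow]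
      ring
  rw [sum_congr rfl hterm, ← mul_sum, mul_comm]
  gcongr
  calc _ ≤ (3 / 4 : ℝ) ^ 0 / (1 - 3 / 4) := by
        rw [range_eq_Ico]; exact geom_sum_Ico_le_of_lt_one (by norm_num) (by norm_num)
    _ = 4 := by norm_num

lemma sum_range_add_eight_choose (j : ℕ) : ∑ w ∈ range j, (w + 8).choose 8 = (j + 8).choose 9 := by
  cases j with
  | zero => rfl
  | succ n => rw [Nat.sum_range_add_choose]

lemma eight_mul_choose_nine_le (j : ℕ) : 8 * (j + 8).choose 9 ≤ j * (j + 8).choose 8 := by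
  have h := Nat.choose_succ_right_eq (j + 8) 8
  rw [show j + 8 - 8 = j by omega] at h
  nlinarith

/-- One step of the induction on `j`: choosing the parent costs `c w / 2 ^ T ≤ 2 / j`, an edge
weight `≥ a` costs `2 ^ (-a)`, and `(2 / 3) ^ r * C(j + 8, 8)` is a supersolution of the
recursion. -/
lemma sum_recursion_le {j T : ℕ} (hj : 0 < j) (c : ℕ → ℕ) (hc : ∀ w, c w * j ≤ 2 ^ (T + 1))
    (f r : ℕ) :
    ∑ w ∈ range j, ∑ a ∈ range (r + 1),
        c w * ((1 / 2 : ℝ) ^ (f + (T + a)) * (2 / 3) ^ (r - a) * (w + 8).choose 8)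
      ≤ (1 / 2) ^ f * (2 / 3) ^ r * (j + 8).choose 8 := by
  have hj' : (0 : ℝ) < j := by exact_mod_cast hj
  have hcT : ∀ w, (c w : ℝ) * (1 / 2) ^ T ≤ 2 / j := fun w => by
    rw [le_div_iff₀ hj', one_div_pow, mul_right_comm, mul_one_div, div_le_iff₀ (by positivity)]
    have : (c w * j : ℝ) ≤ 2 ^ (T + 1) := by exact_mod_cast hc w
    linarith [pow_succ (2 : ℝ) T]
  have hchoose : (8 : ℝ) * (j + 8).choose 9 ≤ j * (j + 8).choose 8 := by
    exact_mod_cast eight_mul_choose_nine_le j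
  calc _ ≤ ∑ w ∈ range j, ∑ a ∈ range (r + 1),
          (2 / j : ℝ) * (1 / 2) ^ f * ((1 / 2) ^ a * (2 / 3) ^ (r - a)) * (w + 8).choose 8 := by
        refine sum_le_sum fun w _ => sum_le_sum fun a _ => ?_
        calc _ = (c w * (1 / 2 : ℝ) ^ T) * (1 / 2) ^ f * ((1 / 2) ^ a * (2 / 3) ^ (r - a))
              * (w + 8).choose 8 := by ring
          _ ≤ _ := by gcongr; exact hcT w
    _ = (2 / j : ℝ) * (1 / 2) ^ f * (((j + 8).choose 9 : ℕ)
          * ∑ a ∈ range (r + 1), (1 / 2 : ℝ) ^ a * (2 / 3) ^ (r - a)) := by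
        rw [← sum_range_add_eight_choose, Nat.cast_sum, sum_mul_sum, mul_sum]
        refine sum_congr rfl fun w _ => ?_
        rw [mul_sum]
        exact sum_congr rfl fun a _ => by ring
    _ ≤ (2 / j : ℝ) * (1 / 2) ^ f * (((j + 8).choose 9 : ℕ) * (4 * (2 / 3) ^ r)) := by
        gcongr; exact sum_half_pow_mul_two_thirds_pow_le r
    _ = (1 / 2) ^ f * (2 / 3) ^ r * (8 * (j + 8).choose 9 / j) := by ring
    _ ≤ _ := by gcongr; rwa [div_le_iff₀ hj', mul_comm _ (j : ℝ)]

/-- Seed position `pair (pair b v) k` is the `k`-th digit of the sample that draws the parent of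
vertex `v` (`b = 0`) or the weight of its parent edge (`b = 1`). -/
def vertexOf (p : ℕ) : ℕ := (Nat.unpair (Nat.unpair p).1).2

@[simp] lemma vertexOf_pair (b v k : ℕ) : vertexOf (Nat.pair (Nat.pair b v) k) = v := by
  simp [vertexOf]

def vertexBits (T a v : ℕ) : Finset ℕ :=
  (range T).image (Nat.pair (Nat.pair 0 v)) ∪ (range a).image (Nat.pair (Nat.pair 1 v))

lemma vertexOf_of_mem_vertexBits {T a v p : ℕ} (hp : p ∈ vertexBits T a v) : vertexOf p = v := by
  simp only [vertexBits, mem_union, mem_image] at hp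
  rcases hp with ⟨k, -, rfl⟩ | ⟨k, -, rfl⟩ <;> simp

def withVertexPattern (v T K : ℕ) (π : ℕ → Bool) (p : ℕ) : Bool :=
  if vertexOf p = v then
    if (Nat.unpair (Nat.unpair p).1).1 = 0 then K.testBit (T - 1 - (Nat.unpair p).2) else true
  else π p

lemma card_union_vertexBits {F : Finset ℕ} {T a v : ℕ} (hF : ∀ p ∈ F, v < vertexOf p) :
    #(F ∪ vertexBits T a v) = #F + (T + a) := by
  have hinj : ∀ b, Function.Injective (Nat.pair (Nat.pair b v)) := fun b x y h =>
    (Nat.pair_eq_pair.1 h).2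
  rw [card_union_of_disjoint, vertexBits, card_union_of_disjoint,
    card_image_of_injective _ (hinj 0), card_image_of_injective _ (hinj 1), card_range, card_range]
  · simp only [disjoint_left, mem_image, mem_range, not_exists, not_and]
    rintro _ ⟨k, -, rfl⟩ l - h
    simpa using (Nat.pair_eq_pair.1 h).1
  · exact disjoint_left.2 fun p hpF hp => (hF p hpF).ne (vertexOf_of_mem_vertexBits hp).symm

lemma parent_lt (ω : ℝ) {j : ℕ} (hj : 0 < j) : parent ω j < j := Nat.mod_lt _ hj

lemma reach_of_pos (ω : ℝ) {j : ℕ} (hj : 0 < j) :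
    reach ω j = reach ω (parent ω j) + geom (uSlice ω (Nat.pair 1 j)) := by
  cases j with
  | zero => omega
  | succ j => rw [reach, min_eq_left (Nat.lt_succ_iff.1 (parent_lt ω hj))]

lemma bitCyl_inter_reach_subset {F : Finset ℕ} {π : ℕ → Bool} {j : ℕ} (hj : 0 < j)
    (hF : ∀ p ∈ F, j < vertexOf p) (T r : ℕ) :
    bitCyl F π ∩ {ω | r ≤ reach ω j} ⊆
      ⋃ w ∈ range j, ⋃ a ∈ range (r + 1), ⋃ K ∈ parentPatterns j w T,
        bitCyl (F ∪ vertexBits T a j) (withVertexPattern j T K π) ∩ {ω | r - a ≤ reach ω w} := by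
  rintro ω ⟨hωF, hr⟩
  set c₀ : ℕ → Bool := fun k => bit ω (Nat.pair (Nat.pair 0 j) k)
  set c₁ : ℕ → Bool := fun k => bit ω (Nat.pair (Nat.pair 1 j) k)
  set g := geom (uSlice ω (Nat.pair 1 j))
  have hreach : r ≤ reach ω (parent ω j) + g := reach_of_pos ω hj ▸ hr
  simp only [Set.mem_iUnion, mem_range]
  refine ⟨parent ω j, parent_lt ω hj, min g r, Nat.lt_succ_of_le (min_le_right _ _),
    binNat c₀ T, ?_, fun p hp => ?_, show r - min g r ≤ _ by omega⟩
  · rw [parent, uSlice_eq_binVal]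
    exact mem_parentPatterns (binVal_nonneg c₀) (binVal_le_one c₀) hj (binNat_lt c₀ T)
      (binNat_div_le_binVal c₀ T) (binVal_le_binNat_add_one_div c₀ T)
  · rcases mem_union.1 hp with hp | hp
    · rw [withVertexPattern, if_neg (hF p hp).ne']
      exact hωF p hp
    · simp only [vertexBits, mem_union, mem_image, mem_range] at hp
      rcases hp with ⟨k, hk, rfl⟩ | ⟨k, hk, rfl⟩
      · simpa [withVertexPattern] using (testBit_binNat c₀ hk).symm
      · simp only [withVertexPattern, vertexOf_pair, Nat.unpair_pair, if_true, one_ne_zero,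
          if_false]
        refine eq_true_of_one_sub_lt_binVal c₁ ?_
        rw [← uSlice_eq_binVal]
        exact one_sub_lt_of_lt_geom (hk.trans_le (min_le_left _ _))

theorem measure_bitCyl_inter_reach_le {T : ℕ} (j : ℕ) (hT : 4 * j ≤ 2 ^ T) (F : Finset ℕ)
    (π : ℕ → Bool) (hF : ∀ p ∈ F, j < vertexOf p) (r : ℕ) :
    μ0 (bitCyl F π ∩ {ω | r ≤ reach ω j})
      ≤ ENNReal.ofReal ((1 / 2) ^ #F * (2 / 3) ^ r * (j + 8).choose 8) := by
  induction j using Nat.strong_induction_on generalizing F π r with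
  | _ j ih =>
  rcases Nat.eq_zero_or_pos r with rfl | hr
  · have hB : (1 : ℝ) ≤ (j + 8).choose 8 := by exact_mod_cast Nat.choose_pos (by omega)
    calc _ ≤ μ0 (bitCyl F π) := measure_mono Set.inter_subset_left
      _ ≤ ENNReal.ofReal ((1 / 2) ^ #F) := measure_bitCyl_le F π
      _ ≤ _ := ENNReal.ofReal_le_ofReal <| by
        rw [pow_zero, mul_one]; exact le_mul_of_one_le_right (by positivity) hB
  rcases Nat.eq_zero_or_pos j with rfl | hj
  · have : {ω : ℝ | r ≤ reach ω 0} = ∅ := Set.eq_empty_of_forall_notMem fun ω hω => by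
      rw [Set.mem_ofPred, reach] at hω; omega
    rw [this, Set.inter_empty, measure_empty]
    exact zero_le
  have hF' : ∀ w < j, ∀ a, ∀ p ∈ F ∪ vertexBits T a j, w < vertexOf p := fun w hw a p hp => by
    rcases mem_union.1 hp with hp | hp
    · exact hw.trans (hF p hp)
    · rwa [vertexOf_of_mem_vertexBits hp]
  calc _ ≤ ∑ w ∈ range j, ∑ a ∈ range (r + 1), ∑ K ∈ parentPatterns j w T,
          μ0 (bitCyl (F ∪ vertexBits T a j) (withVertexPattern j T K π)
            ∩ {ω | r - a ≤ reach ω w}) := by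
        refine (measure_mono (bitCyl_inter_reach_subset hj hF T r)).trans ?_
        refine (measure_biUnion_finset_le _ _).trans (sum_le_sum fun w _ => ?_)
        refine (measure_biUnion_finset_le _ _).trans (sum_le_sum fun a _ => ?_)
        exact measure_biUnion_finset_le _ _
    _ ≤ ∑ w ∈ range j, ∑ a ∈ range (r + 1), ∑ K ∈ parentPatterns j w T,
          ENNReal.ofReal ((1 / 2) ^ (#F + (T + a)) * (2 / 3) ^ (r - a) * (w + 8).choose 8) := by
        refine sum_le_sum fun w hw => sum_le_sum fun a _ => sum_le_sum fun K _ => ?_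
        have hw := mem_range.1 hw
        rw [← card_union_vertexBits (T := T) (a := a) hF]
        exact ih w hw (by omega) _ _ (hF' w hw a) _
    _ = ENNReal.ofReal (∑ w ∈ range j, ∑ a ∈ range (r + 1), #(parentPatterns j w T) *
          ((1 / 2 : ℝ) ^ (#F + (T + a)) * (2 / 3) ^ (r - a) * (w + 8).choose 8)) := by
        rw [ENNReal.ofReal_sum_of_nonneg fun _ _ => by positivity]
        refine sum_congr rfl fun w _ => ?_
        rw [ENNReal.ofReal_sum_of_nonneg fun _ _ => by positivity]
        refine sum_congr rfl fun a _ => ?_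
        rw [sum_const, nsmul_eq_mul, ENNReal.ofReal_mul (Nat.cast_nonneg (#(parentPatterns j w T))),
          ENNReal.ofReal_natCast]
    _ ≤ _ := ENNReal.ofReal_le_ofReal
        (sum_recursion_le hj _ (card_parentPatterns_mul_le hj hT) _ _)

lemma measure_reach_ge_le (j m : ℕ) :
    μ0 {ω | m ≤ reach ω j} ≤ ENNReal.ofReal ((2 / 3) ^ m * (j + 8).choose 8) := by
  have h := measure_bitCyl_inter_reach_le (T := 4 * j) j Nat.lt_two_pow_self.le ∅ (fun _ => true)
    (by simp) m
  simpa [bitCyl] using h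

lemma measure_exists_reach_ge_le (n m : ℕ) :
    μ0 {ω | ∃ j < n, m ≤ reach ω j} ≤ ENNReal.ofReal ((2 / 3) ^ m * (n + 8).choose 9) := by
  have hunion : {ω | ∃ j < n, m ≤ reach ω j} = ⋃ j ∈ range n, {ω | m ≤ reach ω j} := by
    ext ω; simp
  calc _ ≤ ∑ j ∈ range n, μ0 {ω | m ≤ reach ω j} := hunion ▸ measure_biUnion_finset_le _ _
    _ ≤ ∑ j ∈ range n, ENNReal.ofReal ((2 / 3) ^ m * (j + 8).choose 8) :=
        sum_le_sum fun j _ => measure_reach_ge_le j m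
    _ = _ := by
        rw [← ENNReal.ofReal_sum_of_nonneg fun _ _ => by positivity, ← mul_sum,
          ← sum_range_add_eight_choose, Nat.cast_sum]

lemma choose_nine_le_pow {n : ℕ} (hn : 2 ≤ n) : (n + 8).choose 9 ≤ n ^ 36 :=
  calc (n + 8).choose 9 ≤ (n + 8) ^ 9 := Nat.choose_le_pow _ _
    _ ≤ (n ^ 4) ^ 9 := by
        gcongr
        nlinarith [Nat.pow_le_pow_left hn 3, pow_succ n 3]
    _ = n ^ 36 := by rw [← pow_mul]

lemma two_thirds_pow_mul_choose_le {n : ℕ} (hn : 2 ≤ n) {h : ℝ} (hh : 360 * Real.log n ≤ h) :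
    (2 / 3 : ℝ) ^ (⌊h⌋₊ + 1) * (n + 8).choose 9 ≤ Real.exp (-(1 / 5) * h) := by
  have hn' : (0 : ℝ) < n := by positivity
  have hlog : 0 ≤ Real.log n := Real.log_nonneg (by exact_mod_cast one_le_two.trans hn)
  have hh0 : 0 ≤ h := (mul_nonneg (by norm_num) hlog).trans hh
  have hpow : (2 / 3 : ℝ) ^ (⌊h⌋₊ + 1) ≤ Real.exp (-(1 / 3) * h) :=
    calc _ ≤ Real.exp (-(1 / 3)) ^ (⌊h⌋₊ + 1) := by
          gcongr; linarith [Real.add_one_le_exp (-(1 / 3))]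
      _ = Real.exp (-(1 / 3) * (⌊h⌋₊ + 1 : ℕ)) := by rw [← Real.exp_nat_mul, mul_comm]
      _ ≤ _ := Real.exp_le_exp.2 (by have := Nat.lt_floor_add_one h; push_cast; linarith)
  have hchoose : ((n + 8).choose 9 : ℝ) ≤ Real.exp (36 * Real.log n) := by
    rw [show (36 : ℝ) * Real.log n = (36 : ℕ) * Real.log n by norm_num, Real.exp_nat_mul,
      Real.exp_log hn']
    exact_mod_cast choose_nine_le_pow hn
  calc _ ≤ Real.exp (-(1 / 3) * h) * Real.exp (36 * Real.log n) := by gcongr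
    _ = Real.exp (-(1 / 3) * h + 36 * Real.log n) := (Real.exp_add _ _).symm
    _ ≤ _ := by gcongr; linarith

end

end ReachingTime

theorem statement12 :
    ∃ c C : ℝ, 0 < c ∧ 0 < C ∧ ∀ n : ℕ, 2 ≤ n → ∀ h : ℝ, C * Real.log n ≤ h →
      μ0 {ω | ∃ j < n, h < (reach ω j : ℝ)} ≤ ENNReal.ofReal (Real.exp (-c * h)) := by
  refine ⟨1 / 5, 360, by norm_num, by norm_num, fun n hn h hh => ?_⟩
  have hh0 : 0 ≤ h :=
    (mul_nonneg (by norm_num) (Real.log_nonneg (by exact_mod_cast one_le_two.trans hn))).trans hh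
  calc _ ≤ μ0 {ω | ∃ j < n, ⌊h⌋₊ + 1 ≤ reach ω j} := by
        refine measure_mono ?_
        rintro ω ⟨j, hj, hjh⟩
        exact ⟨j, hj, (Nat.floor_lt hh0).2 hjh⟩
    _ ≤ _ := ReachingTime.measure_exists_reach_ge_le n _
    _ ≤ _ := ENNReal.ofReal_le_ofReal (ReachingTime.two_thirds_pow_mul_choose_le hn hh)
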